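/- If (X_n) is a sequence of infinite-dimensional Banach spaces with T(X_i) = 1 for at least one index i, then for 1 ≤ p < ∞, T(ℓ_p(X_n)) = 2^{1/p}. In particular T(ℓ_2(c_0)) = √2. -/

import Mathlib

open scoped ENNReal NNReal

/-- The thickness constant `T(X)`: the infimum of `ε > 0` such that finitely many closed
`ε`-balls centered at unit vectors cover the closed unit ball of `X`. -/
noncomputable def thickness (X : Type*) [NormedAddCommGroup X] : ℝ :=
  sInf {ε : ℝ | 0 < ε ∧ ∃ F : Finset X, (∀ x ∈ F, ‖x‖ = 1) ∧
    ∀ y : X, ‖y‖ ≤ 1 → ∃ x ∈ F, ‖y - x‖ ≤ ε}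

/-- Whitley's thickness constant `T_W(X)`: the infimum of `ε > 0` such that there is a finite
`ε`-net consisting of unit vectors for the unit sphere of `X`. -/
noncomputable def whitleyThickness (X : Type*) [NormedAddCommGroup X] : ℝ :=
  sInf {ε : ℝ | 0 < ε ∧ ∃ F : Finset X, (∀ x ∈ F, ‖x‖ = 1) ∧
    ∀ y : X, ‖y‖ = 1 → ∃ x ∈ F, ‖y - x‖ ≤ ε}

open scoped ZeroAtInfty

/-!
Upper bound: if `F` is a finite `ε`-net of unit vectors for the unit ball of `X_i`, then the
vectors `δ_i a`, `a ∈ F`, form a `(ε^p + 1)^{1/p}`-net for the unit ball of `ℓ_p(X_n)`, because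
`‖y - δ_i a‖^p = ‖y_i - a‖^p + (‖y‖^p - ‖y_i‖^p)`. Letting `ε → T(X_i) ≤ 1` gives `2^{1/p}`.

Lower bound: the finitely many centres of a net of unit vectors almost vanish at a far
coordinate `N`, so the unit vector `δ_N u` has distance at least about `(1 + 1)^{1/p}` from
each of them.

For `c₀`, the two vectors `±e₀` already form a `1`-net of its unit ball.
-/

open Filter Topology

section Thickness

variable {X : Type*} [NormedAddCommGroup X]

variable (X) in
def thicknessSet : Set ℝ :=
  {ε : ℝ | 0 < ε ∧ ∃ F : Finset X, (∀ x ∈ F, ‖x‖ = 1) ∧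
    ∀ y : X, ‖y‖ ≤ 1 → ∃ x ∈ F, ‖y - x‖ ≤ ε}

lemma thicknessSet_bddBelow : BddBelow (thicknessSet X) := ⟨0, fun _ hε => hε.1.le⟩

lemma two_mem_thicknessSet {u : X} (hu : ‖u‖ = 1) : (2 : ℝ) ∈ thicknessSet X := by
  refine ⟨two_pos, {u}, by simp [hu], fun y hy => ⟨u, Finset.mem_singleton_self u, ?_⟩⟩
  calc ‖y - u‖ ≤ ‖y‖ + ‖u‖ := norm_sub_le _ _
    _ ≤ 2 := by linarith

lemma thickness_nonneg : 0 ≤ thickness X := Real.sInf_nonneg fun _ hε => hε.1.le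

lemma thickness_le_of_mem_thicknessSet {ε : ℝ} (hε : ε ∈ thicknessSet X) : thickness X ≤ ε :=
  csInf_le thicknessSet_bddBelow hε

lemma le_thickness_of_forall_le {u : X} (hu : ‖u‖ = 1) {c : ℝ}
    (h : ∀ ε ∈ thicknessSet X, c ≤ ε) : c ≤ thickness X :=
  le_csInf ⟨2, two_mem_thicknessSet hu⟩ h

lemma exists_seq_mem_thicknessSet_tendsto {u : X} (hu : ‖u‖ = 1) :
    ∃ ε : ℕ → ℝ, (∀ n, ε n ∈ thicknessSet X) ∧ Tendsto ε atTop (𝓝 (thickness X)) := by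
  obtain ⟨ε, -, hlim, hmem⟩ :=
    exists_seq_tendsto_sInf ⟨2, two_mem_thicknessSet hu⟩ (thicknessSet_bddBelow (X := X))
  exact ⟨ε, hmem, hlim⟩

end Thickness

namespace lp

variable {α : Type*} {E : α → Type*} [∀ n, NormedAddCommGroup (E n)] {p : ℝ≥0∞}

lemma tendsto_norm_apply_cofinite (hp : 0 < p.toReal) (x : lp E p) :
    Tendsto (fun n => ‖x n‖) cofinite (𝓝 0) := by
  have h := ((Real.continuous_rpow_const (inv_nonneg.2 hp.le)).tendsto 0).comp
    (lp.hasSum_norm hp x).summable.tendsto_cofinite_zero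
  simpa [Function.comp_def, Real.rpow_rpow_inv (norm_nonneg _) hp.ne',
    Real.zero_rpow (inv_pos.2 hp).ne'] using h

variable [DecidableEq α]

lemma norm_sub_single_rpow (hp : 0 < p.toReal) (y : lp E p) (j : α) (a : E j) :
    ‖y - lp.single p j a‖ ^ p.toReal =
      ‖y j - a‖ ^ p.toReal + (‖y‖ ^ p.toReal - ‖y j‖ ^ p.toReal) := by
  have split : ∀ z : lp E p,
      ‖z‖ ^ p.toReal = ‖z j‖ ^ p.toReal + ∑' n, if n = j then 0 else ‖z n‖ ^ p.toReal :=
    fun z => by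
      rw [lp.norm_rpow_eq_tsum hp, (lp.hasSum_norm hp z).summable.tsum_eq_add_tsum_ite j]
  have tail : ∀ n, (if n = j then 0 else ‖(y - lp.single p j a) n‖ ^ p.toReal)
      = if n = j then 0 else ‖y n‖ ^ p.toReal := fun n => by
    split_ifs with h
    · rfl
    · rw [lp.coeFn_sub, Pi.sub_apply, lp.single_apply_ne p j a h, sub_zero]
  rw [split (y - _), split y, tsum_congr tail, lp.coeFn_sub, Pi.sub_apply,
    lp.single_apply_self]
  ring

variable [Fact (1 ≤ p)]

lemma toReal_pos_of_ne_top (hp : p ≠ ⊤) : 0 < p.toReal :=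
  ENNReal.toReal_pos (zero_lt_one.trans_le Fact.out).ne' hp

lemma ne_zero_of_one_le : p ≠ 0 := (zero_lt_one.trans_le Fact.out).ne'

lemma norm_single_of_one_le (j : α) (a : E j) : ‖lp.single p j a‖ = ‖a‖ :=
  lp.norm_single (zero_lt_one.trans_le Fact.out) j a

lemma rpow_add_one_rpow_inv_mem_thicknessSet (hp : p ≠ ⊤) (i : α) {ε : ℝ}
    (hε : ε ∈ thicknessSet (E i)) :
    (ε ^ p.toReal + 1) ^ p.toReal⁻¹ ∈ thicknessSet (lp E p) := by
  classical
  obtain ⟨hε0, F, hF, hcover⟩ := hε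
  have hp0 := toReal_pos_of_ne_top hp
  refine ⟨by positivity, F.image (lp.single p i), ?_, fun y hy => ?_⟩
  · simpa [norm_single_of_one_le] using hF
  obtain ⟨a, haF, hya⟩ := hcover (y i) ((lp.norm_apply_le_norm ne_zero_of_one_le y i).trans hy)
  refine ⟨lp.single p i a, Finset.mem_image_of_mem _ haF, ?_⟩
  rw [Real.le_rpow_inv_iff_of_pos (norm_nonneg _) (by positivity) hp0,
    norm_sub_single_rpow hp0]
  have hya' : ‖y i - a‖ ^ p.toReal ≤ ε ^ p.toReal := by gcongr
  have hy' : ‖y‖ ^ p.toReal ≤ 1 := Real.rpow_le_one (norm_nonneg _) hy hp0.le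
  have hyi : 0 ≤ ‖y i‖ ^ p.toReal := by positivity
  linarith

lemma thickness_le (hp : p ≠ ⊤) (i : α) {u : E i} (hu : ‖u‖ = 1) :
    thickness (lp E p) ≤ (thickness (E i) ^ p.toReal + 1) ^ p.toReal⁻¹ := by
  obtain ⟨ε, hmem, hlim⟩ := exists_seq_mem_thicknessSet_tendsto hu
  have hp0 := toReal_pos_of_ne_top hp
  have hcont : Continuous fun t : ℝ => (t ^ p.toReal + 1) ^ p.toReal⁻¹ :=
    ((continuous_id.rpow_const fun _ => Or.inr hp0.le).add continuous_const).rpow_const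
      fun _ => Or.inr (inv_nonneg.2 hp0.le)
  exact ge_of_tendsto' ((hcont.tendsto _).comp hlim) fun n =>
    thickness_le_of_mem_thicknessSet (rpow_add_one_rpow_inv_mem_thicknessSet hp i (hmem n))

lemma rpow_le_norm_sub_single_rpow (hp : 0 < p.toReal) {x : lp E p} (hx : ‖x‖ = 1) (j : α)
    {u : E j} (hu : ‖u‖ = 1) :
    (1 - ‖x j‖) ^ p.toReal + (1 - ‖x j‖ ^ p.toReal) ≤ ‖x - lp.single p j u‖ ^ p.toReal := by
  rw [norm_sub_single_rpow hp, hx, Real.one_rpow]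
  have hxj : ‖x j‖ ≤ 1 := hx ▸ lp.norm_apply_le_norm ne_zero_of_one_le x j
  have hdist : 1 - ‖x j‖ ≤ ‖x j - u‖ := by
    simpa [hu, norm_sub_rev] using norm_sub_norm_le u (x j)
  gcongr

lemma two_rpow_inv_le_thickness [Infinite α] (hp : p ≠ ⊤) (hu : ∀ n, ∃ u : E n, ‖u‖ = 1) :
    (2 : ℝ) ^ p.toReal⁻¹ ≤ thickness (lp E p) := by
  have hp0 := toReal_pos_of_ne_top hp
  choose u hu using hu
  obtain ⟨j₀⟩ := ‹Infinite α›.nonempty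
  refine le_thickness_of_forall_le ((norm_single_of_one_le j₀ (u j₀)).trans (hu j₀)) ?_
  rintro ε ⟨hε0, F, hF, hcover⟩
  choose x hxF hx using fun N =>
    hcover (lp.single p N (u N)) ((norm_single_of_one_le N (u N)).trans (hu N)).le
  have ht : Tendsto (fun N => ‖x N N‖) cofinite (𝓝 0) := by
    refine tendsto_of_tendsto_of_tendsto_of_le_of_le tendsto_const_nhds
      (by simpa using tendsto_finsetSum F fun z _ => tendsto_norm_apply_cofinite hp0 z)
      (fun N => norm_nonneg _)
      (fun N => Finset.single_le_sum (f := fun z : lp E p => ‖z N‖)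
        (fun _ _ => norm_nonneg _) (hxF N))
  have hφ : Tendsto (fun N => (1 - ‖x N N‖) ^ p.toReal + (1 - ‖x N N‖ ^ p.toReal)) cofinite
      (𝓝 2) := by
    have hcont : Continuous fun t : ℝ => (1 - t) ^ p.toReal + (1 - t ^ p.toReal) :=
      ((continuous_const.sub continuous_id).rpow_const fun _ => Or.inr hp0.le).add
        (continuous_const.sub (continuous_id.rpow_const fun _ => Or.inr hp0.le))
    simpa only [Function.comp_def, sub_zero, Real.one_rpow, Real.zero_rpow hp0.ne',
      one_add_one_eq_two] using (hcont.tendsto 0).comp ht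
  have h2 : (2 : ℝ) ≤ ε ^ p.toReal := by
    refine le_of_tendsto' hφ fun N => (rpow_le_norm_sub_single_rpow hp0 (hF _ (hxF N)) N
      (hu N)).trans ?_
    rw [norm_sub_rev]
    exact Real.rpow_le_rpow (norm_nonneg _) (hx N) hp0.le
  exact (Real.rpow_inv_le_iff_of_pos zero_le_two hε0.le hp0).2 h2

theorem thickness_eq_two_rpow_inv [Infinite α] (hp : p ≠ ⊤) (hu : ∀ n, ∃ u : E n, ‖u‖ = 1)
    (i : α) (hi : thickness (E i) ≤ 1) : thickness (lp E p) = 2 ^ p.toReal⁻¹ := by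
  have hp0 := toReal_pos_of_ne_top hp
  refine le_antisymm ?_ (two_rpow_inv_le_thickness hp hu)
  obtain ⟨v, hv⟩ := hu i
  calc thickness (lp E p) ≤ (thickness (E i) ^ p.toReal + 1) ^ p.toReal⁻¹ :=
        thickness_le hp i hv
    _ ≤ (1 ^ p.toReal + 1) ^ p.toReal⁻¹ := by have := thickness_nonneg (X := E i); gcongr
    _ = 2 ^ p.toReal⁻¹ := by rw [Real.one_rpow, one_add_one_eq_two]

end lp

namespace ZeroAtInftyContinuousMap

noncomputable def basisVec (N : ℕ) : C₀(ℕ, ℝ) :=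
  ⟨⟨fun n => if n = N then 1 else 0, continuous_of_discreteTopology⟩, by
    rw [cocompact_eq_atTop]
    refine tendsto_nhds_of_eventually_eq ?_
    filter_upwards [eventually_gt_atTop N] with n hn
    simp [hn.ne']⟩

lemma basisVec_apply (N n : ℕ) : basisVec N n = if n = N then 1 else 0 := rfl

lemma norm_le_of_forall_abs_le (f : C₀(ℕ, ℝ)) {C : ℝ} (hC : 0 ≤ C) (h : ∀ n, |f n| ≤ C) :
    ‖f‖ ≤ C := by
  rw [← norm_toBCF_eq_norm]
  exact (BoundedContinuousFunction.norm_le hC).2 h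

lemma abs_apply_le_norm (f : C₀(ℕ, ℝ)) (n : ℕ) : |f n| ≤ ‖f‖ := by
  rw [← norm_toBCF_eq_norm]
  exact BoundedContinuousFunction.norm_coe_le_norm f.toBCF n

lemma norm_basisVec (N : ℕ) : ‖basisVec N‖ = 1 := by
  refine le_antisymm (norm_le_of_forall_abs_le _ zero_le_one fun n => ?_) ?_
  · rw [basisVec_apply]; split_ifs <;> norm_num
  · simpa [basisVec_apply] using abs_apply_le_norm (basisVec N) N

lemma norm_sub_basisVec_le_one {y : C₀(ℕ, ℝ)} (hy : ‖y‖ ≤ 1) {N : ℕ} (hN : 0 ≤ y N) :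
    ‖y - basisVec N‖ ≤ 1 := by
  refine norm_le_of_forall_abs_le _ zero_le_one fun n => ?_
  have hyn := abs_le.1 ((abs_apply_le_norm y n).trans hy)
  rw [coe_sub, Pi.sub_apply, basisVec_apply, abs_le]
  split_ifs with h
  · subst h; constructor <;> linarith
  · constructor <;> linarith

lemma thickness_le_one : thickness C₀(ℕ, ℝ) ≤ 1 := by
  classical
  refine thickness_le_of_mem_thicknessSet ⟨one_pos, {basisVec 0, -basisVec 0}, ?_, fun y hy => ?_⟩
  · simp [norm_basisVec]
  rcases le_total 0 (y 0) with h0 | h0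
  · exact ⟨basisVec 0, by simp, norm_sub_basisVec_le_one hy h0⟩
  · refine ⟨-basisVec 0, by simp, ?_⟩
    rw [show y - -basisVec 0 = -(-y - basisVec 0) by abel, norm_neg]
    exact norm_sub_basisVec_le_one (by rwa [norm_neg]) (by simpa using h0)

end ZeroAtInftyContinuousMap

theorem thickness_lp_of_exists_factor_one_general
    (p : ℝ≥0∞) [Fact (1 ≤ p)] (hp : p ≠ ⊤)
    (E : ℕ → Type*) [∀ n, NormedAddCommGroup (E n)] [∀ n, NormedSpace ℝ (E n)]
    (hinf : ∀ n, ¬ FiniteDimensional ℝ (E n))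
    (i : ℕ) (hi : thickness (E i) = 1) :
    thickness (lp E p) = 2 ^ (1 / p.toReal) ∧
    thickness (lp (fun _ : ℕ => C₀(ℕ, ℝ)) 2) = Real.sqrt 2 := by
  have hunit : ∀ n, ∃ u : E n, ‖u‖ = 1 := fun n => by
    have : Nontrivial (E n) := by
      by_contra h
      rw [not_nontrivial_iff_subsingleton] at h
      exact hinf n inferInstance
    exact exists_norm_eq (E n) zero_le_one
  have : Fact ((1 : ℝ≥0∞) ≤ 2) := ⟨one_le_two⟩
  refine ⟨by rw [one_div]; exact lp.thickness_eq_two_rpow_inv hp hunit i hi.le, ?_⟩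
  rw [lp.thickness_eq_two_rpow_inv ENNReal.ofNat_ne_top
      (fun _ => ⟨_, ZeroAtInftyContinuousMap.norm_basisVec 0⟩) 0
      ZeroAtInftyContinuousMap.thickness_le_one,
    Real.sqrt_eq_rpow, ENNReal.toReal_ofNat, one_div]

/-- if some factor has thickness 1, then `T(ℓ_p(X_n)) = 2^{1/p}` for
`1 ≤ p < ∞`; in particular `T(ℓ_2(c_0)) = √2`. -/
theorem thickness_lp_of_exists_factor_one
    (p : ℝ≥0∞) [Fact (1 ≤ p)] (hp : p ≠ ⊤)
    (E : ℕ → Type*) [∀ n, NormedAddCommGroup (E n)] [∀ n, NormedSpace ℝ (E n)]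
    [∀ n, CompleteSpace (E n)] (hinf : ∀ n, ¬ FiniteDimensional ℝ (E n))
    (i : ℕ) (hi : thickness (E i) = 1) :
    thickness (lp E p) = 2 ^ (1 / p.toReal) ∧
    thickness (lp (fun _ : ℕ => C₀(ℕ, ℝ)) 2) = Real.sqrt 2 :=
  thickness_lp_of_exists_factor_one_general p hp E hinf i hi
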